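/- Consider a multi-layer ScBM with population matrices P_l = ρ Y B_l Zᵀ, and suppose the rank of Σ_{l=1}^L B_lᵀ B_l equals K_z (the full-rank case K' = K_z). Let V ∈ ℝ^{n×K_z} be any matrix with orthonormal columns and Λ a K_z×K_z invertible diagonal matrix such that Σ_{l=1}^L P_lᵀ P_l = V Λ Vᵀ. Then for all nodes i, j ∈ [n]: Z_{i∗} = Z_{j∗} if and only if V_{i∗} = V_{j∗}; moreover, whenever Z_{i∗} ≠ Z_{j∗}, one has ‖V_{i∗} − V_{j∗}‖₂ = √(1/n_{g_i^z} + 1/n_{g_j^z}). -/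

import Mathlib

/-!
Each `P_lᵀ` factors through the column membership matrix `Z`, so `∑ P_lᵀ P_l = Z C`; comparing with
`V Λ Vᵀ` and using `Vᵀ V = 1` gives `V = Z Q` with `Q = C V Λ⁻¹` square, i.e. the row of `V` at node
`i` is the row of `Q` at cluster `g_i^z`. Since `Zᵀ Z = diag(n^z)`, orthonormality of `V` reads
`Qᵀ diag(n^z) Q = 1`; as `Q` is square this inverts to `Q Qᵀ = diag(1 / n^z)`: the rows of `Q` are
pairwise orthogonal with squared lengths `1 / n_k^z`.
-/

open Matrix Finset
open scoped BigOperators Classical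

noncomputable section

/-- Membership matrix associated with a cluster assignment `g`. -/
def memb {n K : ℕ} (g : Fin n → Fin K) : Matrix (Fin n) (Fin K) ℝ :=
  Matrix.of fun i k => if g i = k then 1 else 0

/-- Size of cluster `k` under assignment `g`. -/
def csize {n K : ℕ} (g : Fin n → Fin K) (k : Fin K) : ℕ :=
  (Finset.univ.filter fun i => g i = k).card

/-- Euclidean distance between the `i`-th and `j`-th rows of `M`. -/
def rowDist {n K : ℕ} (M : Matrix (Fin n) (Fin K) ℝ) (i j : Fin n) : ℝ :=
  Real.sqrt (∑ m, (M i m - M j m) ^ 2)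

namespace Matrix

variable {m n p K : Type*}

theorem sum_sub_sq_eq_mul_transpose [Fintype n] [CommRing K] (Q : Matrix m n K) (a b : m) :
    ∑ k, (Q a k - Q b k) ^ 2 = (Q * Qᵀ) a a - 2 * (Q * Qᵀ) a b + (Q * Qᵀ) b b := by
  simp only [mul_apply, transpose_apply, sub_sq, sum_add_distrib, sum_sub_distrib, mul_sum]
  ring_nf

variable [Field K]

theorem eq_mul_of_mul_eq_mul_diagonal_mul_transpose [Fintype m] [Fintype n] [Fintype p]
    [DecidableEq p] {X : Matrix m n K} {C : Matrix n m K} {V : Matrix m p K} {d : p → K}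
    (hV : Vᵀ * V = 1) (hd : ∀ k, d k ≠ 0) (h : X * C = V * diagonal d * Vᵀ) :
    V = X * (C * V * diagonal d⁻¹) := by
  have hdd : diagonal d * diagonal d⁻¹ = 1 := by
    rw [diagonal_mul_diagonal, ← diagonal_one]
    exact congrArg diagonal (funext fun k => mul_inv_cancel₀ (hd k))
  calc V = V * (diagonal d * (Vᵀ * V) * diagonal d⁻¹) := by
        rw [hV, Matrix.mul_one, hdd, Matrix.mul_one]
    _ = X * C * V * diagonal d⁻¹ := by rw [h]; simp only [Matrix.mul_assoc]
    _ = X * (C * V * diagonal d⁻¹) := by simp only [Matrix.mul_assoc]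

theorem mul_transpose_eq_diagonal_inv [Fintype p] [DecidableEq p] {Q : Matrix p p K}
    {c : p → K} (hc : ∀ k, c k ≠ 0) (h : Qᵀ * diagonal c * Q = 1) :
    Q * Qᵀ = diagonal c⁻¹ := by
  have hright : diagonal c * Q * Qᵀ = 1 := mul_eq_one_comm.mp (by rwa [← Matrix.mul_assoc])
  have hcc : diagonal c⁻¹ * diagonal c = 1 := by
    rw [diagonal_mul_diagonal, ← diagonal_one]
    exact congrArg diagonal (funext fun k => inv_mul_cancel₀ (hc k))
  calc Q * Qᵀ = diagonal c⁻¹ * (diagonal c * Q * Qᵀ) := by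
        rw [← Matrix.mul_assoc, ← Matrix.mul_assoc, hcc, Matrix.one_mul]
    _ = diagonal c⁻¹ := by rw [hright, Matrix.mul_one]

theorem row_injective_of_mul_transpose_eq_diagonal [Fintype n] [DecidableEq p]
    {Q : Matrix p n K} {e : p → K} (he : ∀ k, e k ≠ 0) (h : Q * Qᵀ = diagonal e) {a b : p}
    (hab : Q a = Q b) : a = b := by
  by_contra hne
  have hdiag : (Q * Qᵀ) a b = (Q * Qᵀ) a a := by simp only [mul_apply, transpose_apply, hab]
  rw [h, diagonal_apply_ne _ hne, diagonal_apply_eq] at hdiag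
  exact he a hdiag.symm

end Matrix

section Membership

variable {n K : ℕ} (g : Fin n → Fin K)

theorem memb_mul_row {α : Type*} [Fintype α] (Q : Matrix (Fin K) α ℝ) (i : Fin n) :
    (memb g * Q) i = Q (g i) := by
  ext m
  simp [memb, mul_apply]

theorem memb_row_eq_iff (i j : Fin n) : memb g i = memb g j ↔ g i = g j :=
  ⟨fun h => by simpa [memb] using congrFun h (g j), fun h => by ext; simp [memb, h]⟩

theorem transpose_memb_mul_memb : (memb g)ᵀ * memb g = diagonal fun k => (csize g k : ℝ) := by
  ext a b
  rcases eq_or_ne a b with rfl | hab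
  · simp [memb, mul_apply, csize, ← ite_and]
  · simp only [memb, mul_apply, transpose_apply, of_apply, diagonal_apply_ne _ hab, ← ite_and,
      mul_ite, mul_one, mul_zero]
    exact sum_eq_zero fun i _ => if_neg fun h => hab (h.2.symm.trans h.1)

end Membership

theorem stmt3_general
    (n L Ky Kz : ℕ)
    (ρ : ℝ)
    (gy : Fin n → Fin Ky) (gz : Fin n → Fin Kz)
    (hnz : ∀ k, 0 < csize gz k)
    (B : Fin L → Matrix (Fin Ky) (Fin Kz) ℝ)
    (P : Fin L → Matrix (Fin n) (Fin n) ℝ)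
    (hP : ∀ l, P l = ρ • (memb gy * B l * (memb gz)ᵀ))
    -- eigendecomposition ∑ P_lᵀ P_l = V Λ Vᵀ with V column-orthonormal, Λ invertible diagonal
    (V : Matrix (Fin n) (Fin Kz) ℝ) (hVorth : Vᵀ * V = 1)
    (d : Fin Kz → ℝ) (hd : ∀ m, d m ≠ 0)
    (hdecomp : ∑ l, (P l)ᵀ * P l = V * Matrix.diagonal d * Vᵀ)
    (i j : Fin n) :
    (memb gz i = memb gz j ↔ V i = V j) ∧
      (memb gz i ≠ memb gz j →
        rowDist V i j =
          Real.sqrt (1 / (csize gz (gz i) : ℝ) + 1 / (csize gz (gz j) : ℝ))) := by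
  set c : Fin Kz → ℝ := fun k => (csize gz k : ℝ)
  have hc : ∀ k, c k ≠ 0 := fun k => Nat.cast_ne_zero.mpr (hnz k).ne'
  have hsum : ∑ l, (P l)ᵀ * P l = memb gz * ∑ l, ρ • ((B l)ᵀ * (memb gy)ᵀ * P l) := by
    rw [Matrix.mul_sum]
    refine sum_congr rfl fun l _ => ?_
    nth_rw 1 [hP l]
    simp only [transpose_smul, transpose_mul, transpose_transpose, smul_mul, Matrix.mul_smul,
      Matrix.mul_assoc]
  obtain ⟨Q, hVQ⟩ : ∃ Q, V = memb gz * Q :=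
    ⟨_, eq_mul_of_mul_eq_mul_diagonal_mul_transpose hVorth hd (hsum ▸ hdecomp)⟩
  have hrow : ∀ i, V i = Q (gz i) := fun i => hVQ ▸ memb_mul_row gz Q i
  have hQQ : Q * Qᵀ = diagonal c⁻¹ := by
    refine mul_transpose_eq_diagonal_inv hc ?_
    rw [← transpose_memb_mul_memb, ← hVorth, hVQ, transpose_mul]
    simp only [Matrix.mul_assoc]
  have hQinj : ∀ {a b}, Q a = Q b → a = b :=
    row_injective_of_mul_transpose_eq_diagonal (fun k => inv_ne_zero (hc k)) hQQ
  simp only [ne_eq, memb_row_eq_iff, hrow]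
  refine ⟨⟨congrArg Q, hQinj⟩, fun hne => ?_⟩
  rw [rowDist, hrow, hrow, sum_sub_sq_eq_mul_transpose, hQQ, diagonal_apply_ne _ hne,
    diagonal_apply_eq, diagonal_apply_eq]
  simp [c, one_div]

/-- full-rank case of Lemma 2.3 (column clusters). -/
theorem stmt3
    (n L Ky Kz : ℕ) (hn : 0 < n) (hL : 0 < L)
    (ρ : ℝ) (hρ0 : 0 < ρ) (hρ1 : ρ ≤ 1)
    (gy : Fin n → Fin Ky) (gz : Fin n → Fin Kz)
    (hny : ∀ k, 0 < csize gy k) (hnz : ∀ k, 0 < csize gz k)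
    (B : Fin L → Matrix (Fin Ky) (Fin Kz) ℝ)
    (hB : ∀ l a b, 0 ≤ B l a b ∧ B l a b ≤ 1)
    (P : Fin L → Matrix (Fin n) (Fin n) ℝ)
    (hP : ∀ l, P l = ρ • (memb gy * B l * (memb gz)ᵀ))
    -- full-rank case: rank(∑ B_lᵀ B_l) = K_z
    (hrank : (∑ l, (B l)ᵀ * B l).rank = Kz)
    -- eigendecomposition ∑ P_lᵀ P_l = V Λ Vᵀ with V column-orthonormal, Λ invertible diagonal
    (V : Matrix (Fin n) (Fin Kz) ℝ) (hVorth : Vᵀ * V = 1)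
    (d : Fin Kz → ℝ) (hd : ∀ m, d m ≠ 0)
    (hdecomp : ∑ l, (P l)ᵀ * P l = V * Matrix.diagonal d * Vᵀ)
    (i j : Fin n) :
    (memb gz i = memb gz j ↔ V i = V j) ∧
      (memb gz i ≠ memb gz j →
        rowDist V i j =
          Real.sqrt (1 / (csize gz (gz i) : ℝ) + 1 / (csize gz (gz j) : ℝ))) :=
  stmt3_general n L Ky Kz ρ gy gz hnz B P hP V hVorth d hd hdecomp i j
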